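/- For every pair of indices j, k with 1 ≤ j, k ≤ 8 and every pair of squares R ⊂ Q with Q, R ∈ D, one has S_{Q, f_{Q,j,k}(R)} = ε_{j,k} f_{j,k}(S_{Q,R}), where ε_{j,k} ∈ {+1, −1} is a sign depending only on j and k; in particular |S_{Q, f_{Q,j,k}(R)}| = |S_{Q,R}|. -/

import Mathlib

open MeasureTheory Filter Set Topology
open scoped ENNReal

noncomputable section

/-- Side length of generation-`n` squares: `s n = λ₁ ⋯ λₙ` (here `Λ k` is `λ_{k+1}`). -/
def sideLen (Λ : ℕ → ℝ) (n : ℕ) : ℝ := ∏ k ∈ Finset.range n, Λ k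

/-- Lower-left corner of the generation-`n` square encoded by the word `w`. -/
def cornerPt (Λ : ℕ → ℝ) (w : ℕ → Bool × Bool) (n : ℕ) : ℂ :=
  ∑ k ∈ Finset.range n,
    (((if (w k).1 then sideLen Λ k - sideLen Λ (k + 1) else 0 : ℝ) : ℂ) +
      ((if (w k).2 then sideLen Λ k - sideLen Λ (k + 1) else 0 : ℝ) : ℂ) * Complex.I)

/-- The (closed) generation-`n` square encoded by the word `w`. -/
def cSquare (Λ : ℕ → ℝ) (w : ℕ → Bool × Bool) (n : ℕ) : Set ℂ :=
  {z : ℂ | (cornerPt Λ w n).re ≤ z.re ∧ z.re ≤ (cornerPt Λ w n).re + sideLen Λ n ∧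
    (cornerPt Λ w n).im ≤ z.im ∧ z.im ≤ (cornerPt Λ w n).im + sideLen Λ n}

/-- The family `𝒟_n` of generation-`n` squares. -/
def genSq (Λ : ℕ → ℝ) (n : ℕ) : Set (Set ℂ) := {Q | ∃ w, Q = cSquare Λ w n}

/-- The planar Cantor set `K = ⋂ₙ ⋃ⱼ Qⱼⁿ`. -/
def cantorK (Λ : ℕ → ℝ) : Set ℂ := ⋂ n, ⋃ w : ℕ → Bool × Bool, cSquare Λ w n

/-- The linear density `a_n = 4^{-n}/s_n` at generation `n`. -/
def linDensity (Λ : ℕ → ℝ) (n : ℕ) : ℝ := 1 / (4 ^ n * sideLen Λ n)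

/-- `S_Q`: the martingale value at a square `Q`,
`S_Q = μ(Q)⁻¹ ∫_Q ∫_{K ∖ Q} (z-y)⁻¹ dμ(y) dμ(z)`. -/
def SQ (Λ : ℕ → ℝ) (μ : Measure ℂ) (Q : Set ℂ) : ℂ :=
  ⨍ z in Q, ∫ y in cantorK Λ \ Q, (z - y)⁻¹ ∂μ ∂μ

/-- `S_{Q,R}`: the relative martingale started at `Q`, evaluated at `R ⊆ Q`,
`S_{Q,R} = μ(R)⁻¹ ∫_R ∫_{Q ∖ R} (z-y)⁻¹ dμ(y) dμ(z)`. -/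
def Srel (μ : Measure ℂ) (Q R : Set ℂ) : ℂ :=
  ⨍ z in R, ∫ y in Q \ R, (z - y)⁻¹ ∂μ ∂μ

/-- The octant `σ_j`, `1 ≤ j ≤ 8`: points with argument in `[(j-1)π/4, jπ/4]`. -/
def octant (j : ℕ) : Set ℂ :=
  {w : ℂ | ∃ r : ℝ, 0 ≤ r ∧ ∃ φ : ℝ, ((j : ℝ) - 1) * Real.pi / 4 ≤ φ ∧
    φ ≤ (j : ℝ) * Real.pi / 4 ∧ w = (r : ℂ) * Complex.exp (φ * Complex.I)}

/-- Reflection in the imaginary axis: `f₁(x+iy) = -x+iy`. -/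
def sym1 (z : ℂ) : ℂ := -(starRingEnd ℂ z)

/-- Reflection in the real axis: `f₂(x+iy) = x-iy`. -/
def sym2 (z : ℂ) : ℂ := starRingEnd ℂ z

/-- Reflection in the main diagonal: `f₃(x+iy) = y+ix`. -/
def sym3 (z : ℂ) : ℂ := Complex.I * starRingEnd ℂ z

/-- The center of the generation-`n` square encoded by `w`. -/
def squareCenter (Λ : ℕ → ℝ) (w : ℕ → Bool × Bool) (n : ℕ) : ℂ :=
  cornerPt Λ w n + ((sideLen Λ n / 2 : ℝ) : ℂ) + ((sideLen Λ n / 2 : ℝ) : ℂ) * Complex.I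

/-!
Each of `f₁, f₂, f₃` is `z ↦ a * conj z` with `a ∈ {-1, 1, i}`, so the corresponding map about
the centre of `Q` is the reflection `ρ z = a * conj (z - c_Q) + c_Q`. On the digit sequences of
the sub-squares of `Q` it flips the first digit, flips the second one, or swaps them; hence it
permutes the sub-squares of `Q` of every generation. The squares form a countable π-system
containing a neighbourhood base at every point of `K`, and `μ` lives on `K`, so `ρ` preserves
`μ` restricted to `Q`. Changing variables in both integrals of `S_{Q,R}`, with
`(ρ z - ρ y)⁻¹ = a⁻¹ * conj (z - y)⁻¹`, gives `S_{Q,ρR} = a⁻¹ * conj S_{Q,R}`. For `f = p ∘ q`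
with coefficients `a` and `b` this yields `S_{Q,f_Q R} = u⁻¹ * S_{Q,R}` and
`f S_{Q,R} = u * S_{Q,R}`, where `u = a * conj b` satisfies `u ^ 4 = 1`; so `ε = u⁻² = ±1`.
-/

open ComplexConjugate

theorem exists_measurableSet_generateFrom_inter_eq {X : Type*} [TopologicalSpace X]
    [MeasurableSpace X] [BorelSpace X] {K : Set X} {P : Set (Set X)} (hPc : P.Countable)
    (hnhds : ∀ x ∈ K, ∀ U ∈ 𝓝 x, ∃ S ∈ P, x ∈ S ∧ S ⊆ U) {s : Set X}
    (hs : MeasurableSet s) :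
    ∃ t, MeasurableSet[MeasurableSpace.generateFrom P] t ∧ K ∩ s = K ∩ t := by
  suffices h : MeasurableSpace.comap ((↑) : K → X) ‹MeasurableSpace X› ≤
      MeasurableSpace.comap (↑) (MeasurableSpace.generateFrom P) by
    obtain ⟨t, ht, hts⟩ := h _ ⟨s, hs, rfl⟩
    exact ⟨t, ht, Subtype.preimage_coe_eq_preimage_coe_iff.1 hts.symm⟩
  rw [BorelSpace.measurable_eq (α := X), borel, MeasurableSpace.comap_generateFrom]
  refine MeasurableSpace.generateFrom_le ?_
  rintro _ ⟨U, hU, rfl⟩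
  refine ⟨⋃₀ {S ∈ P | S ⊆ U}, .sUnion (hPc.mono (sep_subset _ _))
    fun S hS => MeasurableSpace.measurableSet_generateFrom hS.1, ?_⟩
  ext ⟨x, hx⟩
  simp only [mem_preimage, mem_sUnion, mem_sep_iff]
  refine ⟨fun ⟨S, ⟨_, hSU⟩, hxS⟩ => hSU hxS, fun hxU => ?_⟩
  obtain ⟨S, hSP, hxS, hSU⟩ := hnhds x hx U (hU.mem_nhds hxU)
  exact ⟨S, ⟨hSP, hSU⟩, hxS⟩

theorem MeasureTheory.Measure.ext_of_isPiSystem_of_compl_null {X : Type*} [TopologicalSpace X]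
    [MeasurableSpace X] [BorelSpace X] {K : Set X} {P : Set (Set X)} (hPc : P.Countable)
    (hPm : ∀ S ∈ P, MeasurableSet S) (hPπ : IsPiSystem P)
    (hnhds : ∀ x ∈ K, ∀ U ∈ 𝓝 x, ∃ S ∈ P, x ∈ S ∧ S ⊆ U) {ν₁ ν₂ : Measure X}
    [IsFiniteMeasure ν₁] (h₁ : ν₁ Kᶜ = 0) (h₂ : ν₂ Kᶜ = 0)
    (hP : ∀ S ∈ P, ν₁ S = ν₂ S) (huniv : ν₁ univ = ν₂ univ) : ν₁ = ν₂ := by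
  have hle : MeasurableSpace.generateFrom P ≤ ‹MeasurableSpace X› :=
    MeasurableSpace.generateFrom_le hPm
  have htrim : ν₁.trim hle = ν₂.trim hle := by
    refine ext_of_generate_finite P rfl hPπ (fun S hS => ?_) ?_
    · simpa only [trim_measurableSet_eq hle (MeasurableSpace.measurableSet_generateFrom hS)]
        using hP S hS
    · simpa only [trim_measurableSet_eq hle MeasurableSet.univ] using huniv
  ext s hs
  obtain ⟨t, ht, hst⟩ := exists_measurableSet_generateFrom_inter_eq hPc hnhds hs
  have hK : ∀ ν : Measure X, ν Kᶜ = 0 → ν s = ν t := fun ν hν => by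
    rw [← measure_inter_conull hν, inter_comm, hst, inter_comm, measure_inter_conull hν]
  calc ν₁ s = ν₁ t := hK ν₁ h₁
    _ = ν₂ t := by rw [← trim_measurableSet_eq hle ht, htrim, trim_measurableSet_eq hle ht]
    _ = ν₂ s := (hK ν₂ h₂).symm

theorem MeasureTheory.MeasurePreserving.average_comp {α β E : Type*} [MeasurableSpace α]
    [MeasurableSpace β] [NormedAddCommGroup E] [NormedSpace ℝ E] {μ : Measure α}
    {ν : Measure β} {g : α → β} (hg : MeasurePreserving g μ ν) (he : MeasurableEmbedding g)
    (f : β → E) : ⨍ x, f (g x) ∂μ = ⨍ y, f y ∂ν := by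
  rw [average_eq, average_eq, hg.integral_comp he,
    ← hg.measureReal_preimage MeasurableSet.univ.nullMeasurableSet, preimage_univ]

theorem Srel_image_of_measurePreserving {μ : Measure ℂ} {Q R : Set ℂ} {g : ℂ → ℂ}
    (hg : MeasurableEmbedding g) (hgμ : MeasurePreserving g (μ.restrict Q) (μ.restrict Q))
    (hgQ : g '' Q = Q) (hRQ : R ⊆ Q) (a : ℂ)
    (hker : ∀ z y, (g z - g y)⁻¹ = a * conj (z - y)⁻¹) :
    Srel μ Q (g '' R) = a * conj (Srel μ Q R) := by
  have hres : ∀ A ⊆ Q, MeasurePreserving g (μ.restrict A) (μ.restrict (g '' A)) :=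
    fun A hA => by
      simpa only [Measure.restrict_restrict_of_subset hA,
        Measure.restrict_restrict_of_subset (hgQ ▸ image_mono hA)]
        using hgμ.restrict_image_emb hg A
  have hdiff : Q \ g '' R = g '' (Q \ R) := by rw [image_sdiff hg.injective, hgQ]
  have hinner : ∀ z, ∫ y in Q \ g '' R, (g z - y)⁻¹ ∂μ =
      a * conj (∫ y in Q \ R, (z - y)⁻¹ ∂μ) := fun z => by
    rw [hdiff, ← (hres _ sdiff_subset).integral_comp hg]
    simp only [hker, integral_const_mul, integral_conj]
  rw [Srel, Srel, ← (hres R hRQ).average_comp hg]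
  simp only [hinner, average_eq', integral_const_mul, integral_conj]

def cornerCoord (Λ : ℕ → ℝ) (b : ℕ → Bool) (n : ℕ) : ℝ :=
  ∑ k ∈ Finset.range n, if b k then sideLen Λ k - sideLen Λ (k + 1) else 0

section Coordinates

variable {Λ : ℕ → ℝ}

theorem sideLen_succ (n : ℕ) : sideLen Λ (n + 1) = sideLen Λ n * Λ n :=
  Finset.prod_range_succ _ _

theorem sideLen_pos (hΛ : ∀ k, 0 < Λ k) (n : ℕ) : 0 < sideLen Λ n :=
  Finset.prod_pos fun k _ => hΛ k

theorem cornerCoord_succ (b : ℕ → Bool) (n : ℕ) :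
    cornerCoord Λ b (n + 1) =
      cornerCoord Λ b n + if b n then sideLen Λ n - sideLen Λ (n + 1) else 0 :=
  Finset.sum_range_succ _ _

theorem cornerCoord_congr {b b' : ℕ → Bool} {n : ℕ} (h : ∀ k < n, b k = b' k) :
    cornerCoord Λ b n = cornerCoord Λ b' n :=
  Finset.sum_congr rfl fun k hk => by rw [h k (Finset.mem_range.1 hk)]

theorem cornerCoord_splice (b b' : ℕ → Bool) {m n : ℕ} (h : m ≤ n) :
    cornerCoord Λ (fun k => if k < m then b k else b' k) n =
      cornerCoord Λ b m + (cornerCoord Λ b' n - cornerCoord Λ b' m) := by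
  induction n, h using Nat.le_induction with
  | base => rw [cornerCoord_congr fun k hk => if_pos hk]; ring
  | succ n hmn ih =>
    rw [cornerCoord_succ, cornerCoord_succ, ih, if_neg (show ¬n < m by omega)]
    ring

theorem cornerCoord_not (b : ℕ → Bool) (n : ℕ) :
    cornerCoord Λ (fun k => !b k) n = sideLen Λ 0 - sideLen Λ n - cornerCoord Λ b n := by
  induction n with
  | zero => simp [cornerCoord]
  | succ n ih =>
    rw [cornerCoord_succ, cornerCoord_succ, ih]
    cases b n <;> simp only [Bool.not_false, Bool.not_true, Bool.false_eq_true, if_true, if_false,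
      add_zero] <;> ring

variable (hΛ : ∀ k, Λ k ∈ Ioo (0 : ℝ) (1 / 2))
include hΛ

theorem two_mul_sideLen_succ_lt (n : ℕ) : 2 * sideLen Λ (n + 1) < sideLen Λ n := by
  have := sideLen_pos (fun k => (hΛ k).1) n
  rw [sideLen_succ]
  nlinarith [(hΛ n).2]

theorem tendsto_sideLen_atTop : Tendsto (sideLen Λ) atTop (𝓝 0) := by
  have hle : ∀ n, sideLen Λ n ≤ (1 / 2) ^ n := fun n => by
    induction n with
    | zero => simp [sideLen]
    | succ n ih => linarith [two_mul_sideLen_succ_lt hΛ n, pow_succ (1 / 2 : ℝ) n]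
  exact squeeze_zero (fun n => (sideLen_pos (fun k => (hΛ k).1) n).le) hle
    (tendsto_pow_atTop_nhds_zero_of_lt_one (by norm_num) (by norm_num))

theorem cornerCoord_nested_succ (b : ℕ → Bool) (n : ℕ) :
    cornerCoord Λ b n ≤ cornerCoord Λ b (n + 1) ∧
      cornerCoord Λ b (n + 1) + sideLen Λ (n + 1) ≤ cornerCoord Λ b n + sideLen Λ n := by
  have := two_mul_sideLen_succ_lt hΛ n
  have := sideLen_pos (fun k => (hΛ k).1) (n + 1)
  rw [cornerCoord_succ]
  split <;> constructor <;> linarith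

theorem cornerCoord_nested (b : ℕ → Bool) {m n : ℕ} (h : m ≤ n) :
    cornerCoord Λ b m ≤ cornerCoord Λ b n ∧
      cornerCoord Λ b n + sideLen Λ n ≤ cornerCoord Λ b m + sideLen Λ m := by
  induction n, h using Nat.le_induction with
  | base => exact ⟨le_rfl, le_rfl⟩
  | succ n _ ih =>
    have := cornerCoord_nested_succ hΛ b n
    constructor <;> linarith

/-- The two children of a generation-`n` interval are separated by a gap
`sideLen Λ n - 2 * sideLen Λ (n + 1) > 0`. -/
theorem cornerCoord_eq_of_le {b b' : ℕ → Bool} {n : ℕ}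
    (h₁ : cornerCoord Λ b n ≤ cornerCoord Λ b' n + sideLen Λ n)
    (h₂ : cornerCoord Λ b' n ≤ cornerCoord Λ b n + sideLen Λ n) :
    cornerCoord Λ b n = cornerCoord Λ b' n := by
  induction n with
  | zero => simp [cornerCoord]
  | succ n ih =>
    have hb := cornerCoord_nested_succ hΛ b n
    have hb' := cornerCoord_nested_succ hΛ b' n
    have hparent := ih (by linarith) (by linarith)
    have := two_mul_sideLen_succ_lt hΛ n
    rw [cornerCoord_succ, cornerCoord_succ] at h₁ h₂ ⊢
    split_ifs at h₁ h₂ ⊢ <;> linarith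

end Coordinates

section Squares

variable {Λ : ℕ → ℝ}

theorem cornerPt_re (w : ℕ → Bool × Bool) (n : ℕ) :
    (cornerPt Λ w n).re = cornerCoord Λ (Prod.fst ∘ w) n := by
  rw [cornerPt, Complex.re_sum]
  exact Finset.sum_congr rfl fun k _ => by simp

theorem cornerPt_im (w : ℕ → Bool × Bool) (n : ℕ) :
    (cornerPt Λ w n).im = cornerCoord Λ (Prod.snd ∘ w) n := by
  rw [cornerPt, Complex.im_sum]
  exact Finset.sum_congr rfl fun k _ => by simp

theorem squareCenter_re (w : ℕ → Bool × Bool) (n : ℕ) :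
    (squareCenter Λ w n).re = cornerCoord Λ (Prod.fst ∘ w) n + sideLen Λ n / 2 := by
  simp [squareCenter, cornerPt_re]

theorem squareCenter_im (w : ℕ → Bool × Bool) (n : ℕ) :
    (squareCenter Λ w n).im = cornerCoord Λ (Prod.snd ∘ w) n + sideLen Λ n / 2 := by
  simp [squareCenter, cornerPt_im]

theorem mem_cSquare {z : ℂ} {w : ℕ → Bool × Bool} {n : ℕ} :
    z ∈ cSquare Λ w n ↔
      cornerCoord Λ (Prod.fst ∘ w) n ≤ z.re ∧
        z.re ≤ cornerCoord Λ (Prod.fst ∘ w) n + sideLen Λ n ∧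
        cornerCoord Λ (Prod.snd ∘ w) n ≤ z.im ∧
        z.im ≤ cornerCoord Λ (Prod.snd ∘ w) n + sideLen Λ n := by
  rw [cSquare, mem_ofPred_eq, cornerPt_re, cornerPt_im]

theorem cSquare_eq_of_cornerCoord_eq {w w' : ℕ → Bool × Bool} {n : ℕ}
    (h₁ : cornerCoord Λ (Prod.fst ∘ w) n = cornerCoord Λ (Prod.fst ∘ w') n)
    (h₂ : cornerCoord Λ (Prod.snd ∘ w) n = cornerCoord Λ (Prod.snd ∘ w') n) :
    cSquare Λ w n = cSquare Λ w' n := by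
  ext z
  rw [mem_cSquare, mem_cSquare, h₁, h₂]

theorem cSquare_congr {w w' : ℕ → Bool × Bool} {n : ℕ} (h : ∀ k < n, w k = w' k) :
    cSquare Λ w n = cSquare Λ w' n :=
  cSquare_eq_of_cornerCoord_eq (cornerCoord_congr fun k hk => by simp [h k hk])
    (cornerCoord_congr fun k hk => by simp [h k hk])

theorem dist_le_of_mem_cSquare {z z' : ℂ} {w : ℕ → Bool × Bool} {n : ℕ}
    (hz : z ∈ cSquare Λ w n) (hz' : z' ∈ cSquare Λ w n) : dist z z' ≤ 2 * sideLen Λ n := by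
  rw [mem_cSquare] at hz hz'
  calc dist z z' ≤ |(z - z').re| + |(z - z').im| :=
        (Complex.dist_eq z z').trans_le (Complex.norm_le_abs_re_add_abs_im _)
    _ ≤ sideLen Λ n + sideLen Λ n := by
      rw [Complex.sub_re, Complex.sub_im]
      gcongr <;> rw [abs_le] <;> constructor <;> linarith
    _ = 2 * sideLen Λ n := by ring

theorem measurableSet_cSquare (w : ℕ → Bool × Bool) (n : ℕ) :
    MeasurableSet (cSquare Λ w n) := by
  unfold cSquare
  measurability

theorem genSq_finite (n : ℕ) : (genSq Λ n).Finite := by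
  refine (finite_range fun v : Fin n → Bool × Bool =>
    cSquare Λ (fun k => if h : k < n then v ⟨k, h⟩ else (false, false)) n).subset ?_
  rintro _ ⟨w, rfl⟩
  exact ⟨fun i => w i, cSquare_congr fun k hk => by simp [hk]⟩

theorem countable_iUnion_genSq : (⋃ n, genSq Λ n).Countable :=
  countable_iUnion fun n => (genSq_finite n).countable

theorem measurableSet_cantorK : MeasurableSet (cantorK Λ) := by
  have h : ∀ n, ⋃ w, cSquare Λ w n = ⋃₀ genSq Λ n := fun n => by
    ext z
    simp [genSq]
  simp only [cantorK, h]
  exact .iInter fun n => .sUnion (genSq_finite n).countable fun S ⟨w, hS⟩ =>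
    hS ▸ measurableSet_cSquare w n

variable (hΛ : ∀ k, Λ k ∈ Ioo (0 : ℝ) (1 / 2))
include hΛ

theorem cornerPt_mem_cSquare (w : ℕ → Bool × Bool) (n : ℕ) :
    cornerPt Λ w n ∈ cSquare Λ w n := by
  have := sideLen_pos (fun k => (hΛ k).1) n
  simp only [cSquare, mem_ofPred_eq]
  refine ⟨le_rfl, by linarith, le_rfl, by linarith⟩

theorem cSquare_mono (w : ℕ → Bool × Bool) {m n : ℕ} (h : m ≤ n) :
    cSquare Λ w n ⊆ cSquare Λ w m := by
  intro z hz
  rw [mem_cSquare] at hz ⊢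
  have h₁ := cornerCoord_nested hΛ (Prod.fst ∘ w) h
  have h₂ := cornerCoord_nested hΛ (Prod.snd ∘ w) h
  refine ⟨?_, ?_, ?_, ?_⟩ <;> linarith

theorem cornerCoord_eq_of_mem {z : ℂ} {w w' : ℕ → Bool × Bool} {n : ℕ}
    (hz : z ∈ cSquare Λ w n) (hz' : z ∈ cSquare Λ w' n) :
    cornerCoord Λ (Prod.fst ∘ w) n = cornerCoord Λ (Prod.fst ∘ w') n ∧
      cornerCoord Λ (Prod.snd ∘ w) n = cornerCoord Λ (Prod.snd ∘ w') n := by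
  rw [mem_cSquare] at hz hz'
  exact ⟨cornerCoord_eq_of_le hΛ (by linarith) (by linarith),
    cornerCoord_eq_of_le hΛ (by linarith) (by linarith)⟩

theorem cSquare_subset_of_mem {z : ℂ} {w w' : ℕ → Bool × Bool} {m n : ℕ} (h : m ≤ n)
    (hz : z ∈ cSquare Λ w n) (hz' : z ∈ cSquare Λ w' m) :
    cSquare Λ w n ⊆ cSquare Λ w' m := by
  obtain ⟨h₁, h₂⟩ := cornerCoord_eq_of_mem hΛ (cSquare_mono hΛ w h hz) hz'
  exact cSquare_eq_of_cornerCoord_eq h₁ h₂ ▸ cSquare_mono hΛ w h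

theorem cornerCoord_eq_of_subset {w w' : ℕ → Bool × Bool} {m n : ℕ} (h : m ≤ n)
    (hsub : cSquare Λ w n ⊆ cSquare Λ w' m) :
    cornerCoord Λ (Prod.fst ∘ w) m = cornerCoord Λ (Prod.fst ∘ w') m ∧
      cornerCoord Λ (Prod.snd ∘ w) m = cornerCoord Λ (Prod.snd ∘ w') m :=
  have hz := cornerPt_mem_cSquare hΛ w n
  cornerCoord_eq_of_mem hΛ (cSquare_mono hΛ w h hz) (hsub hz)

theorem isPiSystem_iUnion_genSq : IsPiSystem (⋃ n, genSq Λ n) := by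
  simp only [IsPiSystem, genSq, mem_iUnion, mem_ofPred_eq]
  rintro _ ⟨m, w, rfl⟩ _ ⟨n, w', rfl⟩ ⟨z, hz, hz'⟩
  rcases le_total m n with h | h
  · rw [inter_eq_self_of_subset_right (cSquare_subset_of_mem hΛ h hz' hz)]
    exact ⟨n, w', rfl⟩
  · rw [inter_eq_self_of_subset_left (cSquare_subset_of_mem hΛ h hz hz')]
    exact ⟨m, w, rfl⟩

theorem exists_cSquare_subset_of_mem_nhds {x : ℂ} (hx : x ∈ cantorK Λ) {U : Set ℂ}
    (hU : U ∈ 𝓝 x) : ∃ S ∈ ⋃ n, genSq Λ n, x ∈ S ∧ S ⊆ U := by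
  obtain ⟨ε, hε, hball⟩ := Metric.mem_nhds_iff.1 hU
  obtain ⟨n, hn⟩ := ((tendsto_sideLen_atTop hΛ).eventually (gt_mem_nhds (half_pos hε))).exists
  obtain ⟨w, hw⟩ := mem_iUnion.1 (mem_iInter.1 hx n)
  refine ⟨cSquare Λ w n, mem_iUnion.2 ⟨n, w, rfl⟩, hw, fun z hz => hball ?_⟩
  rw [Metric.mem_ball]
  linarith [dist_le_of_mem_cSquare hz hw]

end Squares

/-- The coefficients `a` for which `z ↦ a * conj z` is one of `sym1`, `sym2`, `sym3`. -/
def symCoeffs : Set ℂ := {-1, 1, Complex.I}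

theorem exists_mem_symCoeffs_of_mem_syms {p : ℂ → ℂ}
    (hp : p ∈ ({sym1, _root_.sym2, sym3} : Set (ℂ → ℂ))) :
    ∃ a ∈ symCoeffs, p = fun z => a * conj z := by
  rcases hp with rfl | rfl | rfl
  · exact ⟨-1, .inl rfl, funext fun z => by simp [sym1]⟩
  · exact ⟨1, .inr (.inl rfl), funext fun z => by simp [_root_.sym2]⟩
  · exact ⟨Complex.I, .inr (.inr rfl), rfl⟩

theorem norm_eq_one_of_mem_symCoeffs {a : ℂ} (ha : a ∈ symCoeffs) : ‖a‖ = 1 := by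
  rcases ha with rfl | rfl | rfl <;> simp

theorem pow_four_eq_one_of_mem_symCoeffs {a b : ℂ} (ha : a ∈ symCoeffs) (hb : b ∈ symCoeffs) :
    (a * conj b) ^ 4 = 1 := by
  rcases ha with rfl | rfl | rfl <;> rcases hb with rfl | rfl | rfl <;> norm_num

theorem exists_sign_inv_eq_mul {u : ℂ} (hu : u ^ 4 = 1) :
    ∃ e : ℝ, (e = 1 ∨ e = -1) ∧ u⁻¹ = e * u := by
  have hinv : u⁻¹ = u ^ 2 * u := inv_eq_of_mul_eq_one_right (by linear_combination hu)
  rcases sq_eq_one_iff.1 (show (u ^ 2) ^ 2 = 1 by linear_combination hu) with h | h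
  · exact ⟨1, .inl rfl, by rw [hinv, h]; simp⟩
  · exact ⟨-1, .inr rfl, by rw [hinv, h]; simp⟩

/-- For `a ∈ symCoeffs` and `c = c_Q` this is `f_{Q,·}` for the corresponding symmetry. -/
def reflectAt (a c : ℂ) (z : ℂ) : ℂ := a * conj (z - c) + c

section Reflections

variable {a : ℂ}

theorem reflectAt_involutive (ha : ‖a‖ = 1) (c : ℂ) : Function.Involutive (reflectAt a c) :=
  fun z => by
    have : a * conj a = 1 := by rw [Complex.mul_conj', ha]; norm_num
    simp only [reflectAt, add_sub_cancel_right, map_mul, Complex.conj_conj]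
    linear_combination (z - c) * this

theorem measurableEmbedding_reflectAt (ha : ‖a‖ = 1) (c : ℂ) :
    MeasurableEmbedding (reflectAt a c) :=
  (MeasurableEquiv.ofInvolutive _ (reflectAt_involutive ha c)
    (by unfold reflectAt; fun_prop)).measurableEmbedding

theorem inv_sub_reflectAt (a c z y : ℂ) :
    (reflectAt a c z - reflectAt a c y)⁻¹ = a⁻¹ * conj (z - y)⁻¹ := by
  simp only [reflectAt, add_sub_add_right_eq_sub, ← mul_sub, ← map_sub,
    sub_sub_sub_cancel_right, mul_inv, map_inv₀]

variable {Λ : ℕ → ℝ}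

/-- The witness keeps the digits of `Q` and, after generation `m`, flips the first digit
(`a = -1`), flips the second digit (`a = 1`) or swaps the two digits (`a = I`). -/
theorem exists_reflectAt_image_cSquare (ha : a ∈ symCoeffs) {m n : ℕ} (hmn : m ≤ n)
    {w wQ : ℕ → Bool × Bool}
    (h₁ : cornerCoord Λ (Prod.fst ∘ w) m = cornerCoord Λ (Prod.fst ∘ wQ) m)
    (h₂ : cornerCoord Λ (Prod.snd ∘ w) m = cornerCoord Λ (Prod.snd ∘ wQ) m) :
    ∃ w' : ℕ → Bool × Bool, (∀ k < m, w' k = wQ k) ∧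
      reflectAt a (squareCenter Λ wQ m) '' cSquare Λ w n = cSquare Λ w' n := by
  have hinv := reflectAt_involutive (norm_eq_one_of_mem_symCoeffs ha) (squareCenter Λ wQ m)
  have hre := squareCenter_re (Λ := Λ) wQ m
  have him := squareCenter_im (Λ := Λ) wQ m
  simp only [Function.comp_def] at h₁ h₂ hre him
  rcases ha with rfl | rfl | rfl <;> [
    refine ⟨fun k => if k < m then wQ k else (!(w k).1, (w k).2), fun k hk => if_pos hk, ?_⟩;
    refine ⟨fun k => if k < m then wQ k else ((w k).1, !(w k).2), fun k hk => if_pos hk, ?_⟩;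
    refine ⟨fun k => if k < m then wQ k else ((w k).2, (w k).1), fun k hk => if_pos hk, ?_⟩] <;>
  · ext z
    rw [hinv.image_eq_preimage_symm, mem_preimage, mem_cSquare, mem_cSquare]
    simp only [Function.comp_def, apply_ite, cornerCoord_splice _ _ hmn, cornerCoord_not]
    simp only [reflectAt, map_sub, neg_mul, one_mul, zero_mul, Complex.add_re, Complex.add_im,
      Complex.sub_re, Complex.sub_im, Complex.mul_re, Complex.mul_im,
      Complex.neg_re, Complex.neg_im, Complex.conj_re, Complex.conj_im, Complex.I_re,
      Complex.I_im, hre, him]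
    constructor <;> rintro ⟨_, _, _, _⟩ <;> refine ⟨?_, ?_, ?_, ?_⟩ <;> linarith

theorem reflectAt_image_cSquare_self (ha : a ∈ symCoeffs) (wQ : ℕ → Bool × Bool) (m : ℕ) :
    reflectAt a (squareCenter Λ wQ m) '' cSquare Λ wQ m = cSquare Λ wQ m := by
  obtain ⟨w', hw', himage⟩ := exists_reflectAt_image_cSquare ha le_rfl rfl rfl (n := m)
  rw [himage, cSquare_congr hw']

end Reflections

section Measure

variable {Λ : ℕ → ℝ} (hΛ : ∀ k, Λ k ∈ Ioo (0 : ℝ) (1 / 2))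
  {a : ℂ} (ha : a ∈ symCoeffs)
include hΛ ha

theorem exists_reflectAt_image_cSquare_of_subset {m n : ℕ} (hmn : m ≤ n)
    {w wQ : ℕ → Bool × Bool} (hsub : cSquare Λ w n ⊆ cSquare Λ wQ m) :
    ∃ w', reflectAt a (squareCenter Λ wQ m) '' cSquare Λ w n = cSquare Λ w' n ∧
      cSquare Λ w' n ⊆ cSquare Λ wQ m := by
  obtain ⟨h₁, h₂⟩ := cornerCoord_eq_of_subset hΛ hmn hsub
  obtain ⟨w', hw', himage⟩ := exists_reflectAt_image_cSquare ha hmn h₁ h₂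
  exact ⟨w', himage, cSquare_congr hw' ▸ cSquare_mono hΛ w' hmn⟩

theorem reflectAt_mem_cantorK {wQ : ℕ → Bool × Bool} {m : ℕ} {x : ℂ}
    (hxQ : x ∈ cSquare Λ wQ m) (hxK : x ∈ cantorK Λ) :
    reflectAt a (squareCenter Λ wQ m) x ∈ cantorK Λ := by
  refine mem_iInter.2 fun n => mem_iUnion.2 ?_
  rcases le_total n m with h | h
  · exact ⟨wQ, cSquare_mono hΛ wQ h
      (reflectAt_image_cSquare_self ha wQ m ▸ mem_image_of_mem _ hxQ)⟩
  · obtain ⟨w, hw⟩ := mem_iUnion.1 (mem_iInter.1 hxK n)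
    obtain ⟨w', hw', -⟩ := exists_reflectAt_image_cSquare_of_subset hΛ ha h
      (cSquare_subset_of_mem hΛ h hw hxQ)
    exact ⟨w', hw' ▸ mem_image_of_mem _ hw⟩

/-- A square meets `Q` in `∅`, in `Q`, or in a sub-square of `Q`. -/
theorem measure_reflectAt_image_inter (μ : Measure ℂ)
    (hμQ : ∀ w n, μ (cSquare Λ w n) = (4 : ℝ≥0∞)⁻¹ ^ n)
    (wQ w : ℕ → Bool × Bool) (m n : ℕ) :
    μ (reflectAt a (squareCenter Λ wQ m) '' (cSquare Λ w n ∩ cSquare Λ wQ m)) =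
      μ (cSquare Λ w n ∩ cSquare Λ wQ m) := by
  rcases (cSquare Λ w n ∩ cSquare Λ wQ m).eq_empty_or_nonempty with hempty | ⟨z, hzS, hzQ⟩
  · rw [hempty, image_empty]
  rcases le_total n m with h | h
  · rw [inter_eq_right.2 (cSquare_subset_of_mem hΛ h hzQ hzS), reflectAt_image_cSquare_self ha]
  · have hsub := cSquare_subset_of_mem hΛ h hzS hzQ
    obtain ⟨w', hw', -⟩ := exists_reflectAt_image_cSquare_of_subset hΛ ha h hsub
    rw [inter_eq_left.2 hsub, hw', hμQ, hμQ]

variable (μ : Measure ℂ) [IsProbabilityMeasure μ] (hμK : μ (cantorK Λ) = 1)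
  (hμQ : ∀ w n, μ (cSquare Λ w n) = (4 : ℝ≥0∞)⁻¹ ^ n)
include hμK hμQ

theorem measurePreserving_reflectAt (wQ : ℕ → Bool × Bool) (m : ℕ) :
    MeasurePreserving (reflectAt a (squareCenter Λ wQ m)) (μ.restrict (cSquare Λ wQ m))
      (μ.restrict (cSquare Λ wQ m)) := by
  have hnorm := norm_eq_one_of_mem_symCoeffs ha
  have hρ := measurableEmbedding_reflectAt hnorm (squareCenter Λ wQ m)
  have hKc : μ (cantorK Λ)ᶜ = 0 := (prob_compl_eq_zero_iff measurableSet_cantorK).2 hμK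
  have hQ : MeasurableSet (cSquare Λ wQ m) := measurableSet_cSquare wQ m
  refine ⟨hρ.measurable, Measure.ext_of_isPiSystem_of_compl_null countable_iUnion_genSq ?_
    (isPiSystem_iUnion_genSq hΛ) (fun x hx U hU => exists_cSquare_subset_of_mem_nhds hΛ hx hU)
    ?_ ?_ ?_ ?_⟩
  · simp only [mem_iUnion, genSq]
    rintro _ ⟨n, w, rfl⟩
    exact measurableSet_cSquare w n
  · rw [hρ.map_apply, Measure.restrict_apply' hQ]
    refine measure_mono_null ?_ hKc
    rintro x ⟨hx, hxQ⟩ hxK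
    exact hx (reflectAt_mem_cantorK hΛ ha hxQ hxK)
  · exact nonpos_iff_eq_zero.1 ((Measure.restrict_apply_le _ _).trans_eq hKc)
  · simp only [mem_iUnion, genSq]
    rintro _ ⟨n, w, rfl⟩
    rw [hρ.map_apply, Measure.restrict_apply' hQ, Measure.restrict_apply' hQ,
      ← (reflectAt_involutive hnorm _).image_eq_preimage_symm,
      ← reflectAt_image_cSquare_self ha wQ m, ← image_inter hρ.injective,
      reflectAt_image_cSquare_self ha wQ m]
    exact measure_reflectAt_image_inter hΛ ha μ hμQ wQ w m n
  · rw [hρ.map_apply, preimage_univ]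

theorem Srel_reflectAt_image {m n : ℕ} {wQ wR : ℕ → Bool × Bool}
    (hsub : cSquare Λ wR n ⊆ cSquare Λ wQ m) :
    Srel μ (cSquare Λ wQ m) (reflectAt a (squareCenter Λ wQ m) '' cSquare Λ wR n) =
      a⁻¹ * conj (Srel μ (cSquare Λ wQ m) (cSquare Λ wR n)) :=
  Srel_image_of_measurePreserving
    (measurableEmbedding_reflectAt (norm_eq_one_of_mem_symCoeffs ha) _)
    (measurePreserving_reflectAt hΛ ha μ hμK hμQ wQ m) (reflectAt_image_cSquare_self ha wQ m)
    hsub a⁻¹ (inv_sub_reflectAt a _)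

end Measure

/-- For all indices `1 ≤ j,k ≤ 8`, if `f = f_{j,k}` is a composition of two of the symmetries
`f₁, f₂, f₃` mapping the octant `σ_j` onto the octant `σ_k`, then there is a sign
`ε_{j,k} = ±1` (depending only on `j` and `k`) such that for every pair of squares `R ⊆ Q`
of `𝒟` one has `S_{Q, f_{Q,j,k}(R)} = ε_{j,k} f_{j,k}(S_{Q,R})`, where
`f_{Q,j,k}(x) = f_{j,k}(x - c_Q) + c_Q`; in particular
`|S_{Q, f_{Q,j,k}(R)}| = |S_{Q,R}|`. -/
theorem relative_martingale_symmetry (Λ : ℕ → ℝ) (lam : ℝ) (hlam : lam < 1 / 2)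
    (hΛ : ∀ n, 1 / 4 ≤ Λ n ∧ Λ n ≤ lam)
    (μ : Measure ℂ) [IsProbabilityMeasure μ]
    (hμK : μ (cantorK Λ) = 1)
    (hμQ : ∀ (w : ℕ → Bool × Bool) (n : ℕ), μ (cSquare Λ w n) = (4 : ℝ≥0∞)⁻¹ ^ n) :
    ∀ j k : ℕ, 1 ≤ j → j ≤ 8 → 1 ≤ k → k ≤ 8 →
    ∀ f : ℂ → ℂ,
      (∃ p ∈ ({sym1, _root_.sym2, sym3} : Set (ℂ → ℂ)), ∃ q ∈ ({sym1, _root_.sym2, sym3} : Set (ℂ → ℂ)),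
        f = p ∘ q) →
      f '' octant j = octant k →
      ∃ e : ℝ, (e = 1 ∨ e = -1) ∧
        ∀ (m n : ℕ), m < n → ∀ (wQ wR : ℕ → Bool × Bool),
          cSquare Λ wR n ⊆ cSquare Λ wQ m →
          Srel μ (cSquare Λ wQ m)
              ((fun x => f (x - squareCenter Λ wQ m) + squareCenter Λ wQ m) ''
                cSquare Λ wR n)
            = (e : ℂ) * f (Srel μ (cSquare Λ wQ m) (cSquare Λ wR n)) ∧
          ‖Srel μ (cSquare Λ wQ m)
              ((fun x => f (x - squareCenter Λ wQ m) + squareCenter Λ wQ m) ''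
                cSquare Λ wR n)‖
            = ‖Srel μ (cSquare Λ wQ m) (cSquare Λ wR n)‖ := by
  intro j k _ _ _ _ f ⟨p, hp, q, hq, hf⟩ _
  have hΛ' : ∀ k, Λ k ∈ Ioo (0 : ℝ) (1 / 2) := fun k =>
    ⟨by linarith [(hΛ k).1], by linarith [(hΛ k).2]⟩
  obtain ⟨a, ha, rfl⟩ := exists_mem_symCoeffs_of_mem_syms hp
  obtain ⟨b, hb, rfl⟩ := exists_mem_symCoeffs_of_mem_syms hq
  have hu := pow_four_eq_one_of_mem_symCoeffs ha hb
  obtain ⟨e, he, hue⟩ := exists_sign_inv_eq_mul hu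
  refine ⟨e, he, fun m n hmn wQ wR hsub => ?_⟩
  set c := squareCenter Λ wQ m
  have hfQ : (fun x => f (x - c) + c) = reflectAt a c ∘ reflectAt b c := by
    funext x
    simp [hf, reflectAt]
  obtain ⟨w', hw', hw'Q⟩ := exists_reflectAt_image_cSquare_of_subset hΛ' hb hmn.le hsub
  have hS : Srel μ (cSquare Λ wQ m) ((fun x => f (x - c) + c) '' cSquare Λ wR n) =
      (a * conj b)⁻¹ * Srel μ (cSquare Λ wQ m) (cSquare Λ wR n) := by
    rw [hfQ, image_comp, hw', Srel_reflectAt_image hΛ' ha μ hμK hμQ hw'Q, ← hw',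
      Srel_reflectAt_image hΛ' hb μ hμK hμQ hsub]
    simp only [map_mul, map_inv₀, Complex.conj_conj, mul_inv]
    ring
  refine ⟨by rw [hS, hue, hf, Function.comp_apply, map_mul, Complex.conj_conj]; ring, ?_⟩
  rw [hS, norm_mul, norm_inv, Complex.norm_eq_one_of_pow_eq_one hu (by norm_num), inv_one, one_mul]
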